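/- Improved tan(θ) eigenvector bound: Let A be a self-adjoint operator whose smallest eigenvalue λ is isolated with complete eigenspace X, and β > λ the next point of the spectrum. Let y ≠ 0 with λ < ρ(y) < β, set x = P_X y, S = span{x,y}, and θ = ∠{x,y} < π/2. Then tan(θ) ≤ (1/(β − ρ(y)))·‖P_S r(y)‖/‖y‖. -/

import Mathlib

open scoped RealInnerProductSpace
open Submodule

noncomputable section

variable {H : Type*} [NormedAddCommGroup H] [InnerProductSpace ℝ H]

/-- The Rayleigh quotient of `x` with respect to `A`. -/
def rq (A : H →L[ℝ] H) (x : H) : ℝ := ⟪x, A x⟫ / ⟪x, x⟫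

/-- The residual of `x` with respect to `A`. -/
def res (A : H →L[ℝ] H) (x : H) : H := A x - rq A x • x

/-- The acute angle between two vectors. -/
def ang (x y : H) : ℝ := Real.arccos (|⟪x, y⟫| / (‖x‖ * ‖y‖))

/-!
Write `y = x + w` with `x = P_X y` and `w ∈ Xᗮ`. As `λ` is the bottom of the spectrum of `A` and
`(λ, β)` is a gap, `spectrum (A - λ) ⊆ {0} ∪ [β - λ, ∞)`, so `T = A - λ` is positive and
`‖T v‖² ≥ (β - λ) ⟪T v, v⟫`. Cauchy–Schwarz for the form `⟪T ·, ·⟫` at `z` and `T z` turns this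
into `⟪T u, u⟫ ≥ (β - λ) ‖u‖²` on the range of `T`, hence on its closure `Xᗮ`. So
`⟪A w, w⟫ ≥ β ‖w‖²`, and `ρ ‖y‖² = λ ‖x‖² + ⟪A w, w⟫` gives `(β - ρ) ‖w‖² ≤ (ρ - λ) ‖x‖²`.
Since `r(y) ⊥ y`, the vector `u = ‖w‖² x - ‖x‖² w ∈ S` has `⟪u, r⟫ = ‖y‖² ⟪x, r⟫ =
(λ - ρ) ‖x‖² ‖y‖²` and `‖u‖ = ‖x‖ ‖w‖ ‖y‖`, so testing `P_S r(y)` against it gives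
`(ρ - λ) ‖x‖ ‖y‖ ≤ ‖w‖ ‖P_S r(y)‖`. Combine the two bounds with `tan θ = ‖w‖ / ‖x‖`.
-/

namespace spectrum

variable {R A : Type*} [CommRing R] [Ring A] [Algebra R A]

lemma add_mem_of_mem_sub_smul_one {a : A} {r t : R} (ht : t ∈ spectrum R (a - r • 1)) :
    t + r ∈ spectrum R a := by
  rw [← Algebra.algebraMap_eq_smul_one, ← sub_singleton_eq, Set.sub_singleton] at ht
  obtain ⟨s, hs, rfl⟩ := ht
  simpa using hs

lemma mul_self_notMem_mul_self {b : A} {r : R} (h₁ : r ∉ spectrum R b)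
    (h₂ : -r ∉ spectrum R b) : r * r ∉ spectrum R (b * b) := by
  rw [notMem_iff] at *
  have hadd : IsUnit (algebraMap R A r + b) := by
    rwa [← IsUnit.neg_iff, map_neg, neg_sub, sub_neg_eq_add, add_comm] at h₂
  have hfac : algebraMap R A (r * r) - b * b
      = (algebraMap R A r - b) * (algebraMap R A r + b) := by
    rw [sub_mul, mul_add, mul_add, ← Algebra.commutes r b, map_mul]
    abel
  rw [hfac]
  exact h₁.mul hadd

end spectrum

namespace ContinuousLinearMap

lemma inner_sub_smul_one_apply_self (S : H →L[ℝ] H) (m : ℝ) (v : H) :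
    ⟪(S - m • 1) v, v⟫ = ⟪S v, v⟫ - m * ‖v‖ ^ 2 := by
  simp only [sub_apply, smul_apply, one_apply_eq_self, inner_sub_left, real_inner_smul_left,
    real_inner_self_eq_norm_sq]

lemma iInf_inner_mul_norm_sq_le (S : H →L[ℝ] H) (v : H) :
    (⨅ u : Metric.sphere (0 : H) 1, ⟪S u, u⟫) * ‖v‖ ^ 2 ≤ ⟪S v, v⟫ := by
  rcases eq_or_ne v 0 with rfl | hv
  · simp
  have hbdd : BddBelow (Set.range fun u : Metric.sphere (0 : H) 1 => ⟪S u, u⟫) := by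
    refine ⟨-‖S‖, ?_⟩
    rintro _ ⟨u, rfl⟩
    have hu : ‖(u : H)‖ = 1 := by simp
    have h₁ := abs_real_inner_le_norm (S u) u
    have h₂ := S.le_opNorm u
    rw [hu] at h₁ h₂
    linarith [neg_abs_le ⟪S u, u⟫]
  have hnv : 0 < ‖v‖ := norm_pos_iff.mpr hv
  have hmem : ‖v‖⁻¹ • v ∈ Metric.sphere (0 : H) 1 := by simp [norm_smul, hnv.ne']
  have h := ciInf_le hbdd ⟨_, hmem⟩
  simp only [map_smul, real_inner_smul_left, real_inner_smul_right] at h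
  calc _ ≤ ‖v‖⁻¹ * (‖v‖⁻¹ * ⟪S v, v⟫) * ‖v‖ ^ 2 := by gcongr
    _ = ⟪S v, v⟫ := by field_simp

lemma IsPositive.inner_sq_le {T : H →L[ℝ] H} (hT : T.IsPositive) (u v : H) :
    ⟪T u, v⟫ ^ 2 ≤ ⟪T u, u⟫ * ⟪T v, v⟫ := by
  have hpoly : ∀ t : ℝ, 0 ≤ ⟪T v, v⟫ * (t * t) + 2 * ⟪T u, v⟫ * t + ⟪T u, u⟫ := fun t => by
    have h := hT.inner_nonneg_left (u + t • v)
    have hsymm : ⟪T v, u⟫ = ⟪T u, v⟫ := by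
      rw [hT.inner_left_eq_inner_right, real_inner_comm]
    simp only [map_add, map_smul, inner_add_left, inner_add_right, real_inner_smul_left,
      real_inner_smul_right, hsymm] at h
    linarith
  have := discrim_le_zero hpoly
  rw [discrim] at this
  linarith

lemma IsPositive.norm_apply_sq_le {T : H →L[ℝ] H} (hT : T.IsPositive) (v : H) :
    ‖T v‖ ^ 2 ≤ ‖T‖ * ⟪T v, v⟫ := by
  have hcs := hT.inner_sq_le v (T v)
  rw [real_inner_self_eq_norm_sq] at hcs
  have hTTv : ⟪T (T v), T v⟫ ≤ ‖T‖ * ‖T v‖ ^ 2 := by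
    calc ⟪T (T v), T v⟫ ≤ ‖T (T v)‖ * ‖T v‖ := real_inner_le_norm _ _
      _ ≤ ‖T‖ * ‖T v‖ * ‖T v‖ := by gcongr; exact T.le_opNorm _
      _ = ‖T‖ * ‖T v‖ ^ 2 := by ring
  have h0 := hT.inner_nonneg_left v
  rcases (sq_nonneg ‖T v‖).eq_or_lt with h | h
  · rw [← h]; positivity
  · nlinarith [mul_le_mul_of_nonneg_left hTTv h0]

lemma IsPositive.exists_pos_mul_norm_sq_le_of_isUnit {T : H →L[ℝ] H} (hT : T.IsPositive)
    (hT' : IsUnit T) : ∃ c > 0, ∀ v, c * ‖v‖ ^ 2 ≤ ⟪T v, v⟫ := by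
  obtain ⟨u, rfl⟩ := hT'
  set K := ‖(↑u⁻¹ : H →L[ℝ] H)‖
  refine ⟨(K ^ 2 * ‖(u : H →L[ℝ] H)‖ + 1)⁻¹, by positivity, fun v => ?_⟩
  have hinv : ‖v‖ ≤ K * ‖(u : H →L[ℝ] H) v‖ := by
    calc ‖v‖ = ‖(↑u⁻¹ : H →L[ℝ] H) ((u : H →L[ℝ] H) v)‖ := by
          rw [← mul_apply_eq_comp, Units.inv_mul, one_apply_eq_self]
      _ ≤ K * ‖(u : H →L[ℝ] H) v‖ := le_opNorm _ _
  have h0 := hT.inner_nonneg_left v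
  rw [inv_mul_le_iff₀ (by positivity)]
  calc ‖v‖ ^ 2 ≤ K ^ 2 * ‖(u : H →L[ℝ] H) v‖ ^ 2 := by
        rw [← mul_pow]; exact pow_le_pow_left₀ (norm_nonneg v) hinv 2
    _ ≤ K ^ 2 * (‖(u : H →L[ℝ] H)‖ * ⟪(u : H →L[ℝ] H) v, v⟫) := by
        gcongr; exact hT.norm_apply_sq_le v
    _ ≤ _ := by nlinarith

end ContinuousLinearMap

section Spectral

open ContinuousLinearMap

variable [CompleteSpace H]

/-- If `S - m` were invertible for the bottom `m` of the numerical range, it would be coercive,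
pushing the bottom above `m`. -/
lemma IsSelfAdjoint.iInf_inner_mem_spectrum [Nontrivial H] {S : H →L[ℝ] H}
    (hS : IsSelfAdjoint S) : (⨅ u : Metric.sphere (0 : H) 1, ⟪S u, u⟫) ∈ spectrum ℝ S := by
  set m := ⨅ u : Metric.sphere (0 : H) 1, ⟪S u, u⟫
  by_contra hm
  rw [spectrum.notMem_iff, ← IsUnit.neg_iff, neg_sub, Algebra.algebraMap_eq_smul_one] at hm
  have hP : (S - m • 1).IsPositive := by
    refine (isPositive_iff' _).2 ⟨hS.sub (.smul (.all m) (.one _)), fun v => ?_⟩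
    rw [inner_sub_smul_one_apply_self]
    linarith [iInf_inner_mul_norm_sq_le S v]
  obtain ⟨c, hc, hcoer⟩ := hP.exists_pos_mul_norm_sq_le_of_isUnit hm
  have : Nonempty (Metric.sphere (0 : H) 1) :=
    (NormedSpace.sphere_nonempty.mpr zero_le_one).to_subtype
  have : m + c ≤ m := le_ciInf fun u => by
    have := hcoer u
    rw [inner_sub_smul_one_apply_self, mem_sphere_zero_iff_norm.mp u.2] at this
    linarith
  linarith

lemma IsSelfAdjoint.isPositive_of_spectrum_nonneg {S : H →L[ℝ] H} (hS : IsSelfAdjoint S)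
    (h : ∀ t ∈ spectrum ℝ S, 0 ≤ t) : S.IsPositive := by
  refine (isPositive_iff' S).2 ⟨hS, fun v => ?_⟩
  rcases subsingleton_or_nontrivial H with hH | hH
  · simp [Subsingleton.elim v 0]
  exact (mul_nonneg (h _ hS.iInf_inner_mem_spectrum) (sq_nonneg _)).trans
    (iInf_inner_mul_norm_sq_le S v)

lemma IsSelfAdjoint.mul_norm_le_norm_apply {B : H →L[ℝ] H} (hB : IsSelfAdjoint B) {c : ℝ}
    (hc : ∀ t ∈ spectrum ℝ B, c ≤ |t|) (v : H) : c * ‖v‖ ≤ ‖B v‖ := by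
  rcases le_or_gt c 0 with hc0 | hc0
  · exact (mul_nonpos_of_nonpos_of_nonneg hc0 (norm_nonneg v)).trans (norm_nonneg _)
  have hBB : (B * B).IsPositive := by
    have := isPositive_adjoint_comp_self B
    rwa [hB.adjoint_eq] at this
  have hpos : (B * B - c ^ 2 • 1).IsPositive := by
    refine (hBB.isSelfAdjoint.sub (.smul (.all _) (.one _))).isPositive_of_spectrum_nonneg
      fun μ hμ => ?_
    replace hμ := spectrum.add_mem_of_mem_sub_smul_one hμ
    by_contra hneg
    rcases lt_or_ge (μ + c ^ 2) 0 with hs | hs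
    · exact hs.not_ge (spectrum_nonneg_of_nonneg ((nonneg_iff_isPositive _).2 hBB) hμ)
    set r := √(μ + c ^ 2)
    have hr0 : 0 ≤ r := Real.sqrt_nonneg _
    have hr : |r| < c := by
      rw [abs_of_nonneg hr0, Real.sqrt_lt' hc0]
      linarith
    have hnot : ∀ s, |s| < c → s ∉ spectrum ℝ B := fun s hs hsB => (hc s hsB).not_gt hs
    exact spectrum.mul_self_notMem_mul_self (hnot r hr) (hnot (-r) (by rwa [abs_neg]))
      (Real.mul_self_sqrt hs ▸ hμ)
  have h := hpos.inner_nonneg_left v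
  have hBv : ⟪(B * B) v, v⟫ = ‖B v‖ ^ 2 := by
    rw [← real_inner_self_eq_norm_sq]
    exact hB.isSymmetric (B v) v
  rw [inner_sub_smul_one_apply_self, hBv, ← mul_pow] at h
  exact le_of_sq_le_sq (by linarith) (norm_nonneg _)

lemma ContinuousLinearMap.IsPositive.mul_norm_sq_le_inner_of_mem_orthogonal_ker
    {T : H →L[ℝ] H} (hT : T.IsPositive) {δ : ℝ} (hquad : ∀ v, δ * ⟪T v, v⟫ ≤ ‖T v‖ ^ 2)
    {w : H} (hw : w ∈ (LinearMap.ker (T : H →ₗ[ℝ] H))ᗮ) : δ * ‖w‖ ^ 2 ≤ ⟪T w, w⟫ := by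
  have hrange : ∀ z, δ * ‖T z‖ ^ 2 ≤ ⟪T (T z), T z⟫ := fun z => by
    have hcs := hT.inner_sq_le z (T z)
    rw [real_inner_self_eq_norm_sq] at hcs
    have h₁ := hquad z
    have h₂ := hT.inner_nonneg_left (T z)
    rcases (hT.inner_nonneg_left z).eq_or_lt with h0 | h0
    · rw [← h0, zero_mul] at hcs
      rw [pow_eq_zero_iff two_ne_zero |>.mp (le_antisymm hcs (sq_nonneg _)), mul_zero]
      exact h₂
    · nlinarith
  have hclosed : IsClosed {u : H | δ * ‖u‖ ^ 2 ≤ ⟪T u, u⟫} :=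
    isClosed_le (by fun_prop) (by fun_prop)
  rw [T.orthogonal_ker, hT.isSelfAdjoint.adjoint_eq, ← SetLike.mem_coe,
    Submodule.topologicalClosure_coe] at hw
  exact closure_minimal (by rintro _ ⟨z, rfl⟩; exact hrange z) hclosed hw

lemma IsSelfAdjoint.mul_norm_sq_le_inner_of_mem_orthogonal_ker {A : H →L[ℝ] H}
    (hA : IsSelfAdjoint A) {lam β : ℝ} (hlβ : lam < β) (hmin : ∀ t ∈ spectrum ℝ A, lam ≤ t)
    (hgap : spectrum ℝ A ∩ Set.Ioo lam β = ∅) {w : H}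
    (hw : w ∈ (LinearMap.ker ((A - lam • 1 : H →L[ℝ] H) : H →ₗ[ℝ] H))ᗮ) :
    β * ‖w‖ ^ 2 ≤ ⟪A w, w⟫ := by
  set T := A - lam • 1
  have hTsa : IsSelfAdjoint T := hA.sub (.smul (.all lam) (.one _))
  have hspec : ∀ t ∈ spectrum ℝ T, t = 0 ∨ β - lam ≤ t := fun t ht => by
    have hAt := spectrum.add_mem_of_mem_sub_smul_one ht
    have hnot : t + lam ∉ Set.Ioo lam β := fun h => hgap.subset ⟨hAt, h⟩
    have := hmin _ hAt
    rw [Set.mem_Ioo, not_and_or, not_lt, not_lt] at hnot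
    rcases hnot with h | h
    · exact .inl (by linarith)
    · exact .inr (by linarith)
  have hT : T.IsPositive := hTsa.isPositive_of_spectrum_nonneg fun t ht =>
    (hspec t ht).elim (·.ge) fun h => by linarith
  set c := (β - lam) / 2 with hc
  have hB := (hTsa.sub (.smul (.all c) (.one _))).mul_norm_le_norm_apply (c := c) fun t ht => by
    rcases hspec _ (spectrum.add_mem_of_mem_sub_smul_one ht) with h | h
    · rw [show t = -c by linarith, abs_neg, abs_of_pos (by linarith [hc])]
    · exact (le_abs_self t).trans' (by linarith [hc])
  have hquad : ∀ v, (β - lam) * ⟪T v, v⟫ ≤ ‖T v‖ ^ 2 := fun v => by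
    have h := pow_le_pow_left₀ (by positivity) (hB v) 2
    rw [sub_apply, smul_apply, one_apply_eq_self, norm_sub_sq_real, real_inner_smul_right,
      norm_smul, Real.norm_eq_abs, abs_of_pos (by linarith [hc])] at h
    nlinarith
  have := hT.mul_norm_sq_le_inner_of_mem_orthogonal_ker hquad hw
  rw [inner_sub_smul_one_apply_self] at this
  linarith

end Spectral

lemma rq_mul_norm_sq (A : H →L[ℝ] H) (y : H) : rq A y * ‖y‖ ^ 2 = ⟪y, A y⟫ := by
  rw [rq, ← real_inner_self_eq_norm_sq]
  exact div_mul_cancel_of_imp fun h => by simp [inner_self_eq_zero.mp h]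

lemma inner_res_self (A : H →L[ℝ] H) (y : H) : ⟪y, res A y⟫ = 0 := by
  rw [res, inner_sub_right, real_inner_smul_right, real_inner_self_eq_norm_sq, rq_mul_norm_sq,
    sub_self]

lemma tan_ang_add_of_inner_eq_zero {x w : H} (hx : x ≠ 0) (hxw : ⟪x, w⟫ = 0) :
    Real.tan (ang x (x + w)) = ‖w‖ / ‖x‖ := by
  have hnx : 0 < ‖x‖ := norm_pos_iff.mpr hx
  have hpyth : ‖x + w‖ ^ 2 = ‖x‖ ^ 2 + ‖w‖ ^ 2 := by rw [norm_add_sq_real, hxw]; ring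
  have hny : 0 < ‖x + w‖ := by nlinarith [sq_nonneg ‖w‖, norm_nonneg (x + w)]
  have hcos : |⟪x, x + w⟫| / (‖x‖ * ‖x + w‖) = ‖x‖ / ‖x + w‖ := by
    rw [inner_add_right, hxw, add_zero, real_inner_self_eq_norm_sq, abs_of_nonneg (by positivity)]
    field_simp
  have hsin : 1 - (‖x‖ / ‖x + w‖) ^ 2 = (‖w‖ / ‖x + w‖) ^ 2 := by
    field_simp
    linarith
  rw [ang, hcos, Real.tan_arccos, hsin, Real.sqrt_sq (by positivity)]
  field_simp

lemma norm_add_mul_abs_inner_le_norm_starProjection (K : Submodule ℝ H)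
    [K.HasOrthogonalProjection] {x w r : H} (hx : x ∈ K) (hw : w ∈ K) (hxw : ⟪x, w⟫ = 0)
    (hr : ⟪x + w, r⟫ = 0) : ‖x + w‖ * |⟪x, r⟫| ≤ ‖x‖ * ‖w‖ * ‖K.starProjection r‖ := by
  set u := ‖w‖ ^ 2 • x - ‖x‖ ^ 2 • w
  have hu : u ∈ K := K.sub_mem (K.smul_mem _ hx) (K.smul_mem _ hw)
  have hpyth : ‖x + w‖ ^ 2 = ‖x‖ ^ 2 + ‖w‖ ^ 2 := by rw [norm_add_sq_real, hxw]; ring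
  have hur : ⟪u, r⟫ = ‖x + w‖ ^ 2 * ⟪x, r⟫ := by
    rw [inner_add_left] at hr
    rw [inner_sub_left, real_inner_smul_left, real_inner_smul_left, hpyth]
    linear_combination (-‖x‖ ^ 2) * hr
  have hnu : ‖u‖ = ‖x‖ * ‖w‖ * ‖x + w‖ := by
    refine (sq_eq_sq₀ (norm_nonneg _) (by positivity)).mp ?_
    rw [norm_sub_sq_real, real_inner_smul_left, real_inner_smul_right, hxw, norm_smul,
      norm_smul, Real.norm_of_nonneg (by positivity), Real.norm_of_nonneg (by positivity)]
    linear_combination (‖x‖ ^ 2 * ‖w‖ ^ 2) * hpyth.symm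
  have hproj : ⟪u, K.starProjection r⟫ = ⟪u, r⟫ := by
    rw [← K.inner_starProjection_left_eq_right, K.starProjection_eq_self_iff.mpr hu]
  have hcs := abs_real_inner_le_norm u (K.starProjection r)
  rw [hproj, hur, abs_mul, abs_of_nonneg (by positivity), hnu] at hcs
  rcases (norm_nonneg (x + w)).eq_or_lt with h | h
  · rw [← h, zero_mul]; positivity
  · nlinarith

section Eigenvector

variable {A : H →L[ℝ] H} (hA : (A : H →ₗ[ℝ] H).IsSymmetric) {lam : ℝ} {x w : H}
  (hx : A x = lam • x) (hxw : ⟪x, w⟫ = 0)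
include hA hx

lemma inner_res_of_apply_eq_smul (y : H) : ⟪x, res A y⟫ = (lam - rq A y) * ⟪x, y⟫ := by
  have hsymm : ⟪A x, y⟫ = ⟪x, A y⟫ := hA x y
  rw [res, inner_sub_right, real_inner_smul_right, ← hsymm, hx, real_inner_smul_left]
  ring

include hxw

lemma inner_add_apply_add_of_apply_eq_smul :
    ⟪x + w, A (x + w)⟫ = lam * ‖x‖ ^ 2 + ⟪w, A w⟫ := by
  have hwx : ⟪w, A x⟫ = 0 := by rw [hx, real_inner_smul_right, real_inner_comm, hxw, mul_zero]
  have hsymm : ⟪A x, w⟫ = ⟪x, A w⟫ := hA x w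
  have hxw' : ⟪x, A w⟫ = 0 := by rw [← hsymm, hx, real_inner_smul_left, hxw, mul_zero]
  rw [map_add, inner_add_left, inner_add_right, inner_add_right, hwx, hxw', hx,
    real_inner_smul_right, real_inner_self_eq_norm_sq]
  ring

lemma sub_rq_mul_norm_sq_le {β : ℝ} (hβw : β * ‖w‖ ^ 2 ≤ ⟪A w, w⟫) :
    (β - rq A (x + w)) * ‖w‖ ^ 2 ≤ (rq A (x + w) - lam) * ‖x‖ ^ 2 := by
  have hρ := rq_mul_norm_sq A (x + w)
  rw [inner_add_apply_add_of_apply_eq_smul hA hx hxw, norm_add_sq_real, hxw] at hρ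
  rw [real_inner_comm] at hβw
  linear_combination hβw - hρ

lemma abs_rq_sub_mul_le_norm_starProjection (K : Submodule ℝ H) [K.HasOrthogonalProjection]
    (hxK : x ∈ K) (hwK : w ∈ K) :
    |rq A (x + w) - lam| * ‖x‖ ^ 2 * ‖x + w‖
      ≤ ‖x‖ * ‖w‖ * ‖K.starProjection (res A (x + w))‖ := by
  have h := norm_add_mul_abs_inner_le_norm_starProjection K hxK hwK hxw (inner_res_self A _)
  rw [inner_res_of_apply_eq_smul hA hx, inner_add_right, hxw, add_zero,
    real_inner_self_eq_norm_sq, abs_mul, abs_sub_comm, abs_of_nonneg (sq_nonneg ‖x‖)] at h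
  linarith

lemma tan_ang_add_le (hx0 : x ≠ 0) {β : ℝ} (hβw : β * ‖w‖ ^ 2 ≤ ⟪A w, w⟫)
    (hρβ : rq A (x + w) < β) (K : Submodule ℝ H) [K.HasOrthogonalProjection] (hxK : x ∈ K)
    (hwK : w ∈ K) :
    Real.tan (ang x (x + w))
      ≤ 1 / (β - rq A (x + w)) * (‖K.starProjection (res A (x + w))‖ / ‖x + w‖) := by
  set ρ := rq A (x + w)
  set g := ‖K.starProjection (res A (x + w))‖
  have hnx : 0 < ‖x‖ := norm_pos_iff.mpr hx0
  have hny : 0 < ‖x + w‖ := by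
    have := norm_add_sq_real x w
    rw [hxw] at this
    nlinarith [sq_nonneg ‖w‖, norm_nonneg (x + w)]
  have hkey : (β - ρ) * ‖w‖ * ‖x + w‖ ≤ ‖x‖ * g := by
    rcases (norm_nonneg w).eq_or_lt with hw0 | hw0
    · rw [← hw0, mul_zero, zero_mul]; positivity
    refine le_of_mul_le_mul_left ?_ hw0
    calc ‖w‖ * ((β - ρ) * ‖w‖ * ‖x + w‖) = (β - ρ) * ‖w‖ ^ 2 * ‖x + w‖ := by ring
      _ ≤ (ρ - lam) * ‖x‖ ^ 2 * ‖x + w‖ :=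
        mul_le_mul_of_nonneg_right (sub_rq_mul_norm_sq_le hA hx hxw hβw) (norm_nonneg _)
      _ ≤ |ρ - lam| * ‖x‖ ^ 2 * ‖x + w‖ := by gcongr; exact le_abs_self _
      _ ≤ ‖w‖ * (‖x‖ * g) := by
        linarith [abs_rq_sub_mul_le_norm_starProjection hA hx hxw K hxK hwK]
  rw [tan_ang_add_of_inner_eq_zero hx0 hxw, one_div_mul_eq_div, div_div,
    div_le_div_iff₀ hnx (by nlinarith)]
  linarith

end Eigenvector

theorem stmt_19_general [CompleteSpace H] (A : H →L[ℝ] H) (hA : IsSelfAdjoint A)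
    (lam β : ℝ) (hlβ : lam < β)
    (hmin : ∀ t ∈ spectrum ℝ A, lam ≤ t)
    (hgap : spectrum ℝ A ∩ Set.Ioo lam β = ∅)
    (X : Submodule ℝ H) [HasOrthogonalProjection X]
    (hX : X = LinearMap.ker ((A - lam • (1 : H →L[ℝ] H) : H →L[ℝ] H) : H →ₗ[ℝ] H))
    (y : H) (hρ₂ : rq A y < β)
    (S : Submodule ℝ H) [FiniteDimensional ℝ S]
    (hS : S = Submodule.span ℝ ({(orthogonalProjection X y : H), y} : Set H))
    (hθ : ang (orthogonalProjection X y : H) y < Real.pi / 2) :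
    Real.tan (ang (orthogonalProjection X y : H) y)
      ≤ (1 / (β - rq A y))
          * (‖(orthogonalProjection S (res A y) : H)‖ / ‖y‖) := by
  simp only [← starProjection_apply] at hS hθ ⊢
  set x := X.starProjection y
  have hxX : x ∈ X := X.starProjection_apply_mem y
  have hwX : y - x ∈ Xᗮ := X.sub_starProjection_mem_orthogonal y
  have hx : x ≠ 0 := fun h => by simp [h, ang] at hθ
  have hAx : A x = lam • x := by simpa [hX, sub_eq_zero] using hxX
  have hxS : x ∈ S := hS ▸ subset_span (Set.mem_insert _ _)
  have hyS : y ∈ S := hS ▸ subset_span (Set.mem_insert_of_mem _ rfl)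
  have hβw := hA.mul_norm_sq_le_inner_of_mem_orthogonal_ker hlβ hmin hgap (hX ▸ hwX)
  simpa using tan_ang_add_le hA.isSymmetric hAx (inner_right_of_mem_orthogonal hxX hwX) hx hβw
    (by simpa using hρ₂) S hxS (S.sub_mem hyS hxS)

/-- Improved `tan θ` eigenvector bound: if `λ = λ_min(A)` is an isolated eigenvalue of `A`
with complete eigenspace `X`, `β > λ` is the next spectral point, `y ≠ 0` satisfies
`λ < ρ(y) < β`, `x = P_X y`, `S = span{x,y}`, and `θ = ∠{x,y} < π/2`, then
`tan θ ≤ (1/(β − ρ(y)))·‖P_S r(y)‖/‖y‖`. -/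
theorem stmt_19 [CompleteSpace H] (A : H →L[ℝ] H) (hA : IsSelfAdjoint A)
    (lam β : ℝ) (hlβ : lam < β)
    (hmin : ∀ t ∈ spectrum ℝ A, lam ≤ t)
    (hβspec : β ∈ spectrum ℝ A)
    (hgap : spectrum ℝ A ∩ Set.Ioo lam β = ∅)
    (X : Submodule ℝ H) [HasOrthogonalProjection X]
    (hX : X = LinearMap.ker ((A - lam • (1 : H →L[ℝ] H) : H →L[ℝ] H) : H →ₗ[ℝ] H))
    (hXne : X ≠ ⊥)
    (y : H) (hy : y ≠ 0) (hρ₁ : lam < rq A y) (hρ₂ : rq A y < β)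
    (S : Submodule ℝ H) [FiniteDimensional ℝ S]
    (hS : S = Submodule.span ℝ ({(orthogonalProjection X y : H), y} : Set H))
    (hθ : ang (orthogonalProjection X y : H) y < Real.pi / 2) :
    Real.tan (ang (orthogonalProjection X y : H) y)
      ≤ (1 / (β - rq A y))
          * (‖(orthogonalProjection S (res A y) : H)‖ / ‖y‖) :=
  stmt_19_general A hA lam β hlβ hmin hgap X hX y hρ₂ S hS hθ
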